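/- arXiv:1409.5681 — 3 statements merged into one kernel-verified Lean document; each statement's English description precedes it below -/
import Mathlib

section
/- Let H be a one-counter parity game with a designated state s, and let i ∈ ℕ. Extend H with i fresh Verifier-owned states v_0,…,v_{i−1}, all of color 0, and weight +1 edges v_0→v_1→…→v_{i−1}→s (with no other edges from the fresh states). Then Verifier has a winning strategy in the extended game from the configuration (v_0, 0) if and only if Verifier has a winning strategy in H from the configuration (s, i). -/
namespace OneCounter

abbrev Config (S : Type) := S × ℕ

/-- A maximal (finite or infinite) play over a step relation, represented as a
function `ℕ → Option C` that is `some` on an initial segment. -/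
structure PlayOn {C : Type} (step : C → C → Prop) where
  f : ℕ → Option C
  start : (f 0).isSome
  succ : ∀ n c', f (n+1) = some c' → ∃ c, f n = some c ∧ step c c'
  maximal : ∀ n c, f n = some c → f (n+1) = none → ∀ c', ¬ step c c'

/-- The history after `n` steps, most recent configuration first. -/
def hist {C : Type} (f : ℕ → Option C) (n : ℕ) : List C :=
  ((List.range (n+1)).reverse).filterMap f

/-- A strategy for the player owning the configurations satisfying `mine`:
a partial function from histories (most recent configuration first) to
configurations, prescribing only legal moves and defined whenever a move
is available. -/
structure StrategyOn {C : Type} (step : C → C → Prop) (mine : C → Prop) where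
  act : List C → Option C
  legal : ∀ h c c', act (c :: h) = some c' → step c c'
  total : ∀ h c, mine c → (∃ c', step c c') → (act (c :: h)).isSome

/-- A play is compatible with a strategy if at every position owned by the
strategy's player, the next configuration is the prescribed one. -/
def Compat {C : Type} {step : C → C → Prop} {mine : C → Prop}
    (σ : StrategyOn step mine) (ρ : PlayOn step) : Prop :=
  ∀ n c, ρ.f n = some c → mine c → ρ.f (n+1) = σ.act (hist ρ.f n)

/-- A one-counter parity game: two players `Verifier` (`true`) and
`Falsifier` (`false`); every state has an owner and a color. -/
structure OCPG (S : Type) where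
  owner : S → Bool
  trans : S → ℤ → S → Prop
  color : S → ℕ

namespace OCPG

variable {S : Type} (G : OCPG S)

/-- One step between configurations: a transition whose weight matches the
counter difference (the counter, being a natural number, never goes below 0). -/
def Step (c c' : Config S) : Prop := G.trans c.1 ((c'.2 : ℤ) - (c.2 : ℤ)) c'.1

/-- All edge weights lie in `{-1, 0, +1}`. -/
def SmallWeights : Prop := ∀ s v s', G.trans s v s' → v = -1 ∨ v = 0 ∨ v = 1

/-- Color `k` occurs infinitely often along the play. -/
def InfOcc (ρ : PlayOn G.Step) (k : ℕ) : Prop :=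
  ∀ N, ∃ n, N ≤ n ∧ ∃ c, ρ.f n = some c ∧ G.color c.1 = k

/-- The least color occurring infinitely often exists and is even. -/
def VerifierWinsInf (ρ : PlayOn G.Step) : Prop :=
  ∃ k, G.InfOcc ρ k ∧ Even k ∧ ∀ k', G.InfOcc ρ k' → k ≤ k'

/-- Player `b` wins the play: a finite maximal play is lost by the owner of its
last configuration, and an infinite play is won by Verifier iff the least color
occurring infinitely often is even. -/
def WinsPlay (b : Bool) (ρ : PlayOn G.Step) : Prop :=
  (∃ n c, ρ.f n = some c ∧ ρ.f (n+1) = none ∧ G.owner c.1 ≠ b)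
  ∨ ((∀ n, (ρ.f n).isSome) ∧ (G.VerifierWinsInf ρ ↔ b = true))

/-- Player `b` has a winning strategy from configuration `c₀`. -/
def WinsFrom (b : Bool) (c₀ : Config S) : Prop :=
  ∃ σ : StrategyOn G.Step (fun c => G.owner c.1 = b),
    ∀ ρ : PlayOn G.Step, ρ.f 0 = some c₀ → Compat σ ρ → G.WinsPlay b ρ

end OCPG


/-- Extend `H` with `i` fresh Verifier-owned states `v_0, …, v_{i-1}` (the
`Sum.inr` part), all of color 0, and weight +1 edges
`v_0 → v_1 → … → v_{i-1} → s`, with no other edges from the fresh states. -/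
def chainGame {S : Type} (H : OCPG S) (s : S) (i : ℕ) : OCPG (S ⊕ Fin i) where
  owner := fun x => match x with
    | .inl a => H.owner a
    | .inr _ => true
  trans := fun x v y =>
    (∃ a b, x = .inl a ∧ y = .inl b ∧ H.trans a v b) ∨
    (∃ m : Fin i, ∃ h : (m : ℕ) + 1 < i, x = .inr m ∧ y = .inr ⟨(m : ℕ) + 1, h⟩ ∧ v = 1) ∨
    (∃ m : Fin i, (m : ℕ) + 1 = i ∧ x = .inr m ∧ y = .inl s ∧ v = 1)
  color := fun x => match x with
    | .inl a => H.color a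
    | .inr _ => 0

/-! ### Auxiliary lemmas for `chainGame_correct` -/

section ChainAux

/-! #### `hist` lemmas -/

theorem hist_zero_some {C : Type} {f : ℕ → Option C} {c : C} (h : f 0 = some c) :
    hist f 0 = [c] := by simp [hist, show List.range 1 = [0] from rfl, h]

theorem hist_zero_none {C : Type} {f : ℕ → Option C} (h : f 0 = none) :
    hist f 0 = [] := by simp [hist, show List.range 1 = [0] from rfl, h]

theorem hist_succ {C : Type} (f : ℕ → Option C) (n : ℕ) :
    hist f (n+1) = (f (n+1)).toList ++ hist f n := by
  unfold hist
  rw [List.range_succ, List.reverse_append]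
  cases h : f (n+1) <;> simp [h]

theorem hist_succ_some {C : Type} {f : ℕ → Option C} {n : ℕ} {c : C} (h : f (n+1) = some c) :
    hist f (n+1) = c :: hist f n := by
  rw [hist_succ, h]; rfl

theorem hist_succ_none {C : Type} {f : ℕ → Option C} {n : ℕ} (h : f (n+1) = none) :
    hist f (n+1) = hist f n := by
  rw [hist_succ, h]; rfl

theorem hist_head {C : Type} {f : ℕ → Option C} {n : ℕ} {c : C} (h : f n = some c) :
    ∃ t, hist f n = c :: t := by
  cases n with
  | zero => exact ⟨[], hist_zero_some h⟩
  | succ n => exact ⟨hist f n, hist_succ_some h⟩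

theorem hist_congr {C : Type} {f g : ℕ → Option C} {n : ℕ}
    (h : ∀ j, j ≤ n → f j = g j) : hist f n = hist g n := by
  induction n with
  | zero => simp [hist, show List.range 1 = [0] from rfl, List.filterMap_cons, h 0 (le_refl 0)]
  | succ n ih =>
    rw [hist_succ, hist_succ, h (n+1) (le_refl _), ih (fun j hj => h j (by omega))]

theorem takeWhile_append_of_all {α : Type _} (p : α → Bool) {l : List α} (r : List α)
    (h : ∀ x ∈ l, p x) : (l ++ r).takeWhile p = l ++ r.takeWhile p := by
  induction l with
  | nil => simp
  | cons a t ih =>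
    rw [List.cons_append, List.takeWhile_cons_of_pos (h a (by simp)),
      ih (fun x hx => h x (by simp [hx])), List.cons_append]

/-! #### Configurations of the extended game -/

def up {S : Type} {i : ℕ} (c : Config S) : Config (S ⊕ Fin i) := (.inl c.1, c.2)

def toH {S : Type} {i : ℕ} (c : Config (S ⊕ Fin i)) : Option (Config S) :=
  match c.1 with
  | .inl a => some (a, c.2)
  | .inr _ => none

theorem toH_up {S : Type} {i : ℕ} (c : Config S) : toH (up (i := i) c) = some c := rfl

theorem up_injective {S : Type} {i : ℕ} : Function.Injective (up (S := S) (i := i)) := by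
  rintro ⟨a, v⟩ ⟨b, w⟩ h
  simp only [up, Prod.mk.injEq, Sum.inl.injEq] at h
  rw [h.1, h.2]

def preF (S : Type) (i : ℕ) : ℕ → Option (Config (S ⊕ Fin i)) :=
  fun n => if h : n < i then some (.inr ⟨n, h⟩, n) else none

def pre (S : Type) (i : ℕ) : List (Config (S ⊕ Fin i)) := hist (preF S i) (i - 1)

theorem pre_head {S : Type} {i : ℕ} (hi : 0 < i) :
    ∃ (h : i - 1 < i) (t : List (Config (S ⊕ Fin i))),
      pre S i = (Sum.inr ⟨i-1, h⟩, (i-1 : ℕ)) :: t := by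
  have h : i - 1 < i := by omega
  have hp : preF S i (i-1) = some (Sum.inr ⟨i-1, h⟩, (i-1 : ℕ)) := dif_pos h
  obtain ⟨t, ht⟩ := hist_head hp
  exact ⟨h, t, ht⟩

def strip {S : Type} {i : ℕ} (h : List (Config (S ⊕ Fin i))) : List (Config S) :=
  (h.takeWhile (fun c => c.1.isLeft)).filterMap toH

theorem filterMap_toH_map_up {S : Type} {i : ℕ} (l : List (Config S)) :
    (l.map (up (i := i))).filterMap toH = l := by
  induction l with
  | nil => rfl
  | cons c t ih => simp [List.filterMap_cons, toH_up, ih]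

theorem strip_spec {S : Type} {i : ℕ} (hi : 0 < i) (l : List (Config S)) :
    strip (l.map up ++ pre S i) = l := by
  obtain ⟨h, t, ht⟩ := pre_head (S := S) hi
  unfold strip
  rw [takeWhile_append_of_all _ _
      (by rintro x hx; obtain ⟨c, -, rfl⟩ := List.mem_map.1 hx; rfl),
    ht, List.takeWhile_cons_of_neg (by simp)]
  rw [List.append_nil]
  exact filterMap_toH_map_up l

end ChainAux

section ChainSteps

variable {S : Type} {H : OCPG S} {s : S} {i : ℕ}

def forced (s : S) (i : ℕ) (n v : ℕ) : Config (S ⊕ Fin i) :=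
  if h : n + 1 < i then (.inr ⟨n+1, h⟩, v+1) else (.inl s, v+1)

theorem step_up {c c' : Config S} (h : H.Step c c') :
    (chainGame H s i).Step (up c) (up c') :=
  Or.inl ⟨c.1, c'.1, rfl, rfl, h⟩

theorem step_inl_inv {a : S} {v : ℕ} {d : Config (S ⊕ Fin i)}
    (h : (chainGame H s i).Step (.inl a, v) d) :
    ∃ e : Config S, d = up e ∧ H.Step (a, v) e := by
  rcases d with ⟨y, w⟩
  rcases h with ⟨a', b, hx, hy, ht⟩ | ⟨m, hm, hx, hy, hv⟩ | ⟨m, hm, hx, hy, hv⟩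
  · cases Sum.inl.inj hx
    refine ⟨(b, w), ?_, ht⟩
    simp only [up, Prod.mk.injEq]
    exact ⟨hy, trivial⟩
  · exact absurd hx (by simp)
  · exact absurd hx (by simp)

theorem step_forced (m : Fin i) (v : ℕ) :
    (chainGame H s i).Step (.inr m, v) (forced s i (↑m) v) := by
  unfold forced; split
  · next h => exact Or.inr (Or.inl ⟨m, h, rfl, rfl, by omega⟩)
  · next h =>
    have := m.isLt
    exact Or.inr (Or.inr ⟨m, by omega, rfl, rfl, by omega⟩)

theorem step_inr_inv {m : Fin i} {v : ℕ} {d : Config (S ⊕ Fin i)}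
    (h : (chainGame H s i).Step (.inr m, v) d) : d = forced s i (↑m) v := by
  rcases d with ⟨y, w⟩
  rcases h with ⟨a', b, hx, hy, ht⟩ | ⟨m', hm', hx, hy, hv⟩ | ⟨m', hm', hx, hy, hv⟩
  · exact absurd hx (by simp)
  · cases Sum.inr.inj hx
    rw [forced, dif_pos hm']
    simp only [Prod.mk.injEq]
    exact ⟨hy, by omega⟩
  · cases Sum.inr.inj hx
    rw [forced, dif_neg (by omega)]
    simp only [Prod.mk.injEq]
    exact ⟨hy, by omega⟩

theorem hist_shape {f : ℕ → Option (Config (S ⊕ Fin i))} {g : ℕ → Option (Config S)}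
    (hi : 0 < i)
    (h1 : ∀ n (h : n < i), f n = some (.inr ⟨n, h⟩, n))
    (h2 : ∀ k, f (i + k) = (g k).map up) :
    ∀ k, hist f (i + k) = (hist g k).map up ++ pre S i := by
  have hpre : hist f (i - 1) = pre S i := by
    apply hist_congr
    intro j hj
    have hji : j < i := by omega
    rw [h1 j hji]
    simp only [preF]
    rw [dif_pos hji]
  intro k
  induction k with
  | zero =>
    have hfi : f (i - 1 + 1) = (g 0).map up := by
      rw [show i - 1 + 1 = i + 0 by omega]; exact h2 0
    rw [show i + 0 = i - 1 + 1 by omega, hist_succ, hfi, hpre]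
    cases h0 : g 0 with
    | none => simp [hist_zero_none h0]
    | some c => simp [hist_zero_some h0]
  | succ k ih =>
    rw [show i + (k+1) = (i + k) + 1 from rfl, hist_succ,
      show f (i + k + 1) = (g (k+1)).map up from h2 (k+1), ih]
    cases hk : g (k+1) <;> simp [hist_succ g k, hk]

theorem winsPlay_iff (hi : 0 < i)
    (ρ : PlayOn (chainGame H s i).Step) (ρ' : PlayOn H.Step)
    (h1 : ∀ n (h : n < i), ρ.f n = some (.inr ⟨n, h⟩, n))
    (h2 : ∀ k, ρ.f (i + k) = (ρ'.f k).map up) :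
    (chainGame H s i).WinsPlay true ρ ↔ H.WinsPlay true ρ' := by
  have hio : ∀ k, (chainGame H s i).InfOcc ρ k ↔ H.InfOcc ρ' k := by
    intro k
    constructor
    · intro h N
      obtain ⟨n, hn, c, hc, hcol⟩ := h (N + i)
      have hni : i ≤ n := by omega
      have hh := h2 (n - i)
      rw [Nat.add_sub_cancel' hni] at hh
      rw [hh] at hc
      cases hg : ρ'.f (n - i) with
      | none => rw [hg] at hc; cases hc
      | some d =>
        rw [hg] at hc
        have hcd : up d = c := Option.some.inj hc
        refine ⟨n - i, by omega, d, hg, ?_⟩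
        rw [← hcd] at hcol
        exact hcol
    · intro h N
      obtain ⟨m, hm, d, hd, hcol⟩ := h N
      refine ⟨i + m, by omega, up d, by rw [h2 m, hd]; rfl, hcol⟩
  have hfin : (∃ n c, ρ.f n = some c ∧ ρ.f (n+1) = none ∧ (chainGame H s i).owner c.1 ≠ true)
      ↔ (∃ n c, ρ'.f n = some c ∧ ρ'.f (n+1) = none ∧ H.owner c.1 ≠ true) := by
    constructor
    · rintro ⟨n, c, hc, hn, how⟩
      rcases Nat.lt_or_ge n i with h | h
      · rw [h1 n h] at hc
        exact absurd (by rw [← Option.some.inj hc]; rfl) how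
      · obtain ⟨k, rfl⟩ : ∃ k, n = i + k := ⟨n - i, by omega⟩
        rw [h2 k] at hc
        cases hg : ρ'.f k with
        | none => rw [hg] at hc; cases hc
        | some d =>
          rw [hg] at hc
          have hcd : up d = c := Option.some.inj hc
          have hn' : ρ'.f (k+1) = none := by
            have := h2 (k+1)
            rw [show i + k + 1 = i + (k+1) from rfl, this] at hn
            cases hgg : ρ'.f (k+1) with
            | none => rfl
            | some e => rw [hgg] at hn; cases hn
          refine ⟨k, d, hg, hn', ?_⟩
          rw [← hcd] at how
          exact how
    · rintro ⟨k, d, hd, hn, how⟩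
      refine ⟨i + k, up d, by rw [h2 k, hd]; rfl, ?_, how⟩
      rw [show i + k + 1 = i + (k+1) from rfl, h2 (k+1), hn]
      rfl
  have hsome : (∀ n, (ρ.f n).isSome) ↔ (∀ k, (ρ'.f k).isSome) := by
    constructor
    · intro h k
      have := h (i + k)
      rw [h2 k] at this
      cases hg : ρ'.f k with
      | none => rw [hg] at this; cases this
      | some d => rfl
    · intro h n
      rcases Nat.lt_or_ge n i with hlt | hge
      · rw [h1 n hlt]; rfl
      · obtain ⟨k, rfl⟩ : ∃ k, n = i + k := ⟨n - i, by omega⟩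
        have hk := h k
        rw [h2 k]
        cases hg : ρ'.f k with
        | none => rw [hg] at hk; cases hk
        | some d => rfl
  have hv : (chainGame H s i).VerifierWinsInf ρ ↔ H.VerifierWinsInf ρ' := by
    unfold OCPG.VerifierWinsInf
    constructor
    · rintro ⟨k, ha, hb, hc⟩
      exact ⟨k, (hio k).mp ha, hb, fun k' hk' => hc k' ((hio k').mpr hk')⟩
    · rintro ⟨k, ha, hb, hc⟩
      exact ⟨k, (hio k).mpr ha, hb, fun k' hk' => hc k' ((hio k').mp hk')⟩
  unfold OCPG.WinsPlay
  rw [hfin, hsome, hv]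

end ChainSteps

section ChainForward

variable {S : Type} {H : OCPG S} {s : S} {i : ℕ}

/-- Translate a Verifier strategy of the extended game into one of `H`. -/
def tau (s : S) (i : ℕ)
    (σ : StrategyOn (chainGame H s i).Step (fun c => (chainGame H s i).owner c.1 = true)) :
    StrategyOn H.Step (fun c => H.owner c.1 = true) where
  act h := (σ.act (h.map up ++ pre S i)).bind toH
  legal := by
    intro h c c' hact
    simp only [List.map_cons, List.cons_append] at hact
    cases hσ : σ.act (up c :: (h.map up ++ pre S i)) with
    | none => rw [hσ] at hact; cases hact
    | some d =>
      rw [hσ] at hact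
      have hstep := σ.legal _ _ _ hσ
      obtain ⟨e, rfl, he⟩ := step_inl_inv hstep
      have : e = c' := by
        have := hact
        rw [show ((some (up e)).bind toH) = some e from rfl] at this
        exact Option.some.inj this
      rw [← this]
      exact he
  total := by
    intro h c hmine hmove
    obtain ⟨c', hc'⟩ := hmove
    have hGmine : (chainGame H s i).owner (up c).1 = true := hmine
    have htot := σ.total (h.map up ++ pre S i) (up c) hGmine ⟨up c', step_up hc'⟩
    simp only [List.map_cons, List.cons_append]
    cases hσ : σ.act (up c :: (h.map up ++ pre S i)) with
    | none => rw [hσ] at htot; cases htot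
    | some d =>
      have hstep := σ.legal _ _ _ hσ
      obtain ⟨e, rfl, -⟩ := step_inl_inv hstep
      rfl

theorem winsFrom_mp (hi : 0 < i)
    (hw : (chainGame H s i).WinsFrom true (.inr ⟨0, hi⟩, 0)) :
    H.WinsFrom true (s, i) := by
  obtain ⟨σ, hσ⟩ := hw
  refine ⟨tau s i σ, ?_⟩
  intro ρ' hρ0 hcomp
  set f : ℕ → Option (Config (S ⊕ Fin i)) :=
    fun n => if h : n < i then some (.inr ⟨n, h⟩, n) else (ρ'.f (n - i)).map up with hf
  have h1 : ∀ n (h : n < i), f n = some (.inr ⟨n, h⟩, n) := fun n h => dif_pos h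
  have h2 : ∀ k, f (i + k) = (ρ'.f k).map up := by
    intro k
    show (if h : i + k < i then _ else (ρ'.f (i + k - i)).map up) = _
    rw [dif_neg (by omega), Nat.add_sub_cancel_left]
  have pstart : (f 0).isSome := by rw [h1 0 hi]; rfl
  have psucc : ∀ n c', f (n+1) = some c' →
      ∃ c, f n = some c ∧ (chainGame H s i).Step c c' := by
    intro n c' hc'
    rcases Nat.lt_or_ge (n+1) i with h | h
    · have hn : n < i := by omega
      refine ⟨(.inr ⟨n, hn⟩, n), h1 n hn, ?_⟩
      rw [h1 (n+1) h] at hc'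
      cases Option.some.inj hc'
      exact Or.inr (Or.inl ⟨⟨n, hn⟩, h, rfl, rfl, by omega⟩)
    rcases Nat.lt_or_ge n i with h' | h'
    · -- n + 1 = i
      have hn1 : n + 1 = i := by omega
      refine ⟨(.inr ⟨n, h'⟩, n), h1 n h', ?_⟩
      rw [show n + 1 = i + 0 by omega, h2 0, hρ0] at hc'
      cases Option.some.inj hc'
      exact Or.inr (Or.inr ⟨⟨n, h'⟩, by simpa using hn1, rfl, rfl,
        by show ((i : ℕ) : ℤ) - (n : ℕ) = 1; omega⟩)
    · -- n ≥ i
      obtain ⟨k, rfl⟩ : ∃ k, n = i + k := ⟨n - i, by omega⟩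
      rw [show i + k + 1 = i + (k+1) from rfl, h2 (k+1)] at hc'
      cases hg : ρ'.f (k+1) with
      | none => rw [hg] at hc'; cases hc'
      | some e =>
        rw [hg] at hc'
        cases Option.some.inj hc'
        obtain ⟨d, hd, hstep⟩ := ρ'.succ k e hg
        exact ⟨up d, by rw [h2 k, hd]; rfl, step_up hstep⟩
  have pmax : ∀ n c, f n = some c → f (n+1) = none →
      ∀ c', ¬ (chainGame H s i).Step c c' := by
    intro n c hc hn c' hstep
    rcases Nat.lt_or_ge (n+1) i with h | h
    · rw [h1 (n+1) h] at hn; cases hn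
    rcases Nat.lt_or_ge n i with h' | h'
    · rw [show n + 1 = i + 0 by omega, h2 0, hρ0] at hn; cases hn
    · obtain ⟨k, rfl⟩ : ∃ k, n = i + k := ⟨n - i, by omega⟩
      rw [show i + k + 1 = i + (k+1) from rfl, h2 (k+1)] at hn
      have hnone : ρ'.f (k+1) = none := by
        cases hg : ρ'.f (k+1) with
        | none => rfl
        | some e => rw [hg] at hn; cases hn
      rw [h2 k] at hc
      cases hg : ρ'.f k with
      | none => rw [hg] at hc; cases hc
      | some d =>
        rw [hg] at hc
        cases Option.some.inj hc
        obtain ⟨e, rfl, he⟩ := step_inl_inv hstep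
        exact ρ'.maximal k d hg hnone e he
  set ρ : PlayOn (chainGame H s i).Step := ⟨f, pstart, psucc, pmax⟩ with hρ
  have hcompG : Compat σ ρ := by
    intro n c hc hmine
    show f (n+1) = σ.act (hist f n)
    rcases Nat.lt_or_ge n i with h | h
    · obtain ⟨t, ht⟩ := hist_head (h1 n h)
      have htot := σ.total t ((.inr ⟨n, h⟩, n) : Config (S ⊕ Fin i)) rfl
        ⟨forced s i n n, step_forced ⟨n, h⟩ n⟩
      obtain ⟨d, hd⟩ := Option.isSome_iff_exists.mp htot
      have hdf : d = forced s i n n := step_inr_inv (σ.legal _ _ _ hd)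
      rw [ht, hd, hdf]
      unfold forced
      split
      · next hlt => exact h1 (n+1) hlt
      · next hge =>
        rw [show n + 1 = i + 0 by omega, h2 0, hρ0]
        rfl
    · obtain ⟨k, rfl⟩ : ∃ k, n = i + k := ⟨n - i, by omega⟩
      have hck : f (i + k) = some c := hc
      rw [h2 k] at hck
      cases hg : ρ'.f k with
      | none => rw [hg] at hck; cases hck
      | some d =>
        rw [hg] at hck
        cases Option.some.inj hck
        have hmine' : H.owner d.1 = true := hmine
        have hc' : ρ'.f (k+1) = (σ.act ((hist ρ'.f k).map up ++ pre S i)).bind toH :=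
          hcomp k d hg hmine'
        have hhist : hist f (i + k) = (hist ρ'.f k).map up ++ pre S i :=
          hist_shape hi h1 h2 k
        rw [← hhist] at hc'
        rw [show i + k + 1 = i + (k+1) from rfl, h2 (k+1), hc']
        cases hx : σ.act (hist f (i + k)) with
        | none => rfl
        | some e =>
          have hcf : f (i + k) = some (up d) := hc
          obtain ⟨t, ht⟩ := hist_head hcf
          rw [ht] at hx
          obtain ⟨e', rfl, -⟩ := step_inl_inv (σ.legal _ _ _ hx)
          rfl
  have hwin := hσ ρ (h1 0 hi) hcompG
  exact (winsPlay_iff hi ρ ρ' h1 h2).mp hwin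

end ChainForward

section ChainBackward

variable {S : Type} {H : OCPG S} {s : S} {i : ℕ}

/-- Translate a Verifier strategy of `H` into one of the extended game. -/
def sigma (τ : StrategyOn H.Step (fun c => H.owner c.1 = true)) (s : S) (i : ℕ) :
    StrategyOn (chainGame H s i).Step (fun c => (chainGame H s i).owner c.1 = true) where
  act h := match h with
    | [] => none
    | (Sum.inr m, v) :: _ => some (forced s i (↑m) v)
    | (Sum.inl a, v) :: t => (τ.act ((a, v) :: strip t)).map up
  legal := by
    intro h c c' hact
    rcases c with ⟨x, v⟩
    cases x with
    | inl a =>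
      have hact' : (τ.act ((a, v) :: strip h)).map up = some c' := hact
      cases hτ : τ.act ((a, v) :: strip h) with
      | none => rw [hτ] at hact'; cases hact'
      | some d =>
        rw [hτ] at hact'
        rw [← Option.some.inj hact']
        exact step_up (τ.legal _ _ _ hτ)
    | inr m =>
      have hact' : some (forced s i (↑m) v) = some c' := hact
      rw [← Option.some.inj hact']
      exact step_forced m v
  total := by
    intro h c hmine hmove
    rcases c with ⟨x, v⟩
    cases x with
    | inl a =>
      obtain ⟨c', hc'⟩ := hmove
      obtain ⟨e, rfl, he⟩ := step_inl_inv hc'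
      have hmine' : H.owner a = true := hmine
      have htot := τ.total (strip h) (a, v) hmine' ⟨e, he⟩
      obtain ⟨d, hd⟩ := Option.isSome_iff_exists.mp htot
      show ((τ.act ((a, v) :: strip h)).map up).isSome = true
      rw [hd]
      rfl
    | inr m => rfl

theorem winsFrom_mpr (hi : 0 < i) (hw : H.WinsFrom true (s, i)) :
    (chainGame H s i).WinsFrom true (.inr ⟨0, hi⟩, 0) := by
  obtain ⟨τ, hτ⟩ := hw
  refine ⟨sigma τ s i, ?_⟩
  intro ρ hρ0 hcomp
  have h1 : ∀ n (h : n < i), ρ.f n = some (.inr ⟨n, h⟩, n) := by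
    intro n
    induction n with
    | zero => intro h; exact hρ0
    | succ n ih =>
      intro h
      have hn : n < i := by omega
      have hc := hcomp n _ (ih hn) rfl
      obtain ⟨t, ht⟩ := hist_head (ih hn)
      rw [ht] at hc
      rw [hc]
      show some (forced s i n n) = _
      unfold forced
      rw [dif_pos h]
  have hfi : ρ.f i = some (.inl s, i) := by
    have hn : i - 1 < i := by omega
    have hc := hcomp (i-1) _ (h1 (i-1) hn) rfl
    obtain ⟨t, ht⟩ := hist_head (h1 (i-1) hn)
    rw [ht] at hc
    have hstep : ρ.f (i-1+1) = some (.inl s, i-1+1) := by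
      rw [hc]
      show some (forced s i (i-1) (i-1)) = _
      unfold forced
      rw [dif_neg (by omega)]
    rwa [show i - 1 + 1 = i by omega] at hstep
  have hcl : ∀ k, ∃ o : Option (Config S), ρ.f (i + k) = o.map up := by
    intro k
    induction k with
    | zero => exact ⟨some (s, i), hfi⟩
    | succ k ih =>
      obtain ⟨o, ho⟩ := ih
      cases hx : ρ.f (i + (k+1)) with
      | none => exact ⟨none, rfl⟩
      | some c' =>
        obtain ⟨c, hc, hstep⟩ := ρ.succ (i+k) c' hx
        rw [ho] at hc
        cases o with
        | none => cases hc
        | some d =>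
          cases Option.some.inj hc
          obtain ⟨e, rfl, -⟩ := step_inl_inv hstep
          exact ⟨some e, rfl⟩
  set g : ℕ → Option (Config S) := fun k => (ρ.f (i+k)).bind toH with hgdef
  have h2 : ∀ k, ρ.f (i + k) = (g k).map up := by
    intro k
    obtain ⟨o, ho⟩ := hcl k
    have hgk : g k = (ρ.f (i+k)).bind toH := rfl
    rw [hgk, ho]
    cases o <;> rfl
  have hg0 : g 0 = some (s, i) := by
    show (ρ.f (i+0)).bind toH = _
    rw [show i + 0 = i from rfl, hfi]
    rfl
  have pstart : (g 0).isSome := by rw [hg0]; rfl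
  have psucc : ∀ k d, g (k+1) = some d → ∃ c, g k = some c ∧ H.Step c d := by
    intro k d hd
    have hfk : ρ.f (i + (k+1)) = some (up d) := by rw [h2 (k+1), hd]; rfl
    obtain ⟨c, hc, hstep⟩ := ρ.succ (i+k) _ hfk
    rw [h2 k] at hc
    cases he : g k with
    | none => rw [he] at hc; cases hc
    | some e =>
      rw [he] at hc
      cases Option.some.inj hc
      obtain ⟨e', heq, he'⟩ := step_inl_inv hstep
      cases up_injective heq
      exact ⟨e, rfl, he'⟩
  have pmax : ∀ k c, g k = some c → g (k+1) = none → ∀ c', ¬ H.Step c c' := by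
    intro k c hck hnone c' hstep'
    have hfk : ρ.f (i + k) = some (up c) := by rw [h2 k, hck]; rfl
    have hfn : ρ.f (i + (k+1)) = none := by rw [h2 (k+1), hnone]; rfl
    exact ρ.maximal (i+k) (up c) hfk hfn (up c') (step_up hstep')
  set ρ' : PlayOn H.Step := ⟨g, pstart, psucc, pmax⟩ with hρ'
  have hcomp' : Compat τ ρ' := by
    intro k c hck hmine
    show g (k+1) = τ.act (hist g k)
    have hρk : ρ.f (i+k) = some (up c) := by rw [h2 k]; rw [show ρ'.f k = g k from rfl] at hck; rw [hck]; rfl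
    have hGstep := hcomp (i+k) (up c) hρk hmine
    have hhist : hist ρ.f (i + k) = (hist g k).map up ++ pre S i :=
      hist_shape hi h1 h2 k
    rw [hhist] at hGstep
    have hck' : g k = some c := hck
    obtain ⟨t, ht⟩ := hist_head hck'
    rw [ht]
    rw [ht, List.map_cons, List.cons_append] at hGstep
    have hGstep2 : ρ.f (i + k + 1) = (τ.act ((c.1, c.2) :: strip (t.map up ++ pre S i))).map up :=
      hGstep
    rw [strip_spec hi t] at hGstep2
    have hl : ρ.f (i + (k+1)) = (g (k+1)).map up := h2 (k+1)
    apply Option.map_injective (up_injective (S := S) (i := i))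
    rw [← hl]
    exact hGstep2
  have hwin := hτ ρ' hg0 hcomp'
  exact (winsPlay_iff hi ρ ρ' h1 h2).mpr hwin

end ChainBackward

/-- Verifier wins the extended game from `(v_0, 0)` iff he wins `H` from
`(s, i)`. -/
theorem chainGame_correct {S : Type} [Finite S] (H : OCPG S) (hH : H.SmallWeights)
    (s : S) (i : ℕ) (hi : 0 < i) :
    (chainGame H s i).WinsFrom true (.inr ⟨0, hi⟩, 0) ↔ H.WinsFrom true (s, i) := by
  exact ⟨winsFrom_mp hi, winsFrom_mpr hi⟩

end OneCounter
end

section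
/- Let c ≥ 1 be a natural number and consider the one-counter parity game with Falsifier-owned states v_0,…,v_c, where each v_j has a weight-0 self-loop, there is a weight −1 edge from v_j to v_{j+1} for each 0 ≤ j < c, state v_c has color 1 and all other states have color 0. Then for every i ∈ ℕ, Verifier has a winning strategy from the configuration (v_0, i) if and only if i < c. -/
/-!
Every state of the gadget belongs to Falsifier and has a self-loop, so all plays are infinite and
Verifier wins a play iff its least color seen infinitely often is even. Along a play from
`(v_0, i)` the state index plus the counter stays equal to `i`, so for `i < c` the state `v_c`
is never reached and every color is `0`. For `c ≤ i` Falsifier can descend to `v_c` and loop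
there forever, making `1` the only color seen infinitely often.
-/

namespace OneCounter

/-- The gadget game for `r < c`: Falsifier-owned states `v_0, …, v_c`, each
with a weight-0 self-loop, weight −1 edges `v_j → v_{j+1}`, state `v_c` colored
1 and all others colored 0. -/
def ltGadget (c : ℕ) : OCPG (Fin (c+1)) where
  owner := fun _ => false
  trans := fun x v y => (x = y ∧ v = 0) ∨ ((x : ℕ) + 1 = (y : ℕ) ∧ v = -1)
  color := fun x => if (x : ℕ) = c then 1 else 0

namespace PlayOn

variable {C : Type} {step : C → C → Prop}

theorem isSome_of_forall_exists_step (hstep : ∀ c, ∃ c', step c c') (ρ : PlayOn step) :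
    ∀ n, (ρ.f n).isSome
  | 0 => ρ.start
  | n + 1 => by
    obtain ⟨c, hc⟩ := Option.isSome_iff_exists.mp (isSome_of_forall_exists_step hstep ρ n)
    obtain ⟨c', hc'⟩ := hstep c
    by_contra hnone
    exact ρ.maximal n c hc (Option.not_isSome_iff_eq_none.mp hnone) c' hc'

theorem apply_eq_of_step_invariant {α : Type} (φ : C → α)
    (hφ : ∀ c c', step c c' → φ c' = φ c) (ρ : PlayOn step) {c₀ : C} (h₀ : ρ.f 0 = some c₀) :
    ∀ n c, ρ.f n = some c → φ c = φ c₀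
  | 0, c, hc => by rw [h₀] at hc; cases hc; rfl
  | n + 1, c, hc => by
    obtain ⟨c', hc', hstep⟩ := ρ.succ n c hc
    rw [hφ c' c hstep, apply_eq_of_step_invariant φ hφ ρ h₀ n c' hc']

end PlayOn

namespace OCPG

variable {S : Type} (G : OCPG S)

theorem infOcc_iff_of_eventually_color_eq {ρ : PlayOn G.Step} {k N : ℕ}
    (hρ : ∀ n, N ≤ n → ∃ c, ρ.f n = some c ∧ G.color c.1 = k) (k' : ℕ) :
    G.InfOcc ρ k' ↔ k' = k := by
  constructor
  · intro h
    obtain ⟨n, hn, c, hc, rfl⟩ := h N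
    obtain ⟨c', hc', rfl⟩ := hρ n hn
    rw [hc] at hc'
    cases hc'
    rfl
  · rintro rfl M
    exact ⟨max M N, le_max_left M N, hρ _ (le_max_right M N)⟩

theorem verifierWinsInf_iff_of_eventually_color_eq {ρ : PlayOn G.Step} {k N : ℕ}
    (hρ : ∀ n, N ≤ n → ∃ c, ρ.f n = some c ∧ G.color c.1 = k) :
    G.VerifierWinsInf ρ ↔ Even k := by
  simp only [VerifierWinsInf, G.infOcc_iff_of_eventually_color_eq hρ]
  constructor
  · rintro ⟨_, rfl, hk, -⟩
    exact hk
  · intro hk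
    exact ⟨k, rfl, hk, fun _ h => h.ge⟩

theorem winsPlay_true_iff_of_isSome {ρ : PlayOn G.Step} (hρ : ∀ n, (ρ.f n).isSome) :
    G.WinsPlay true ρ ↔ G.VerifierWinsInf ρ := by
  constructor
  · rintro (⟨n, _, _, hnone, _⟩ | ⟨_, h⟩)
    · simpa [hnone] using hρ (n + 1)
    · exact h.2 rfl
  · exact fun h => Or.inr ⟨hρ, iff_of_true h rfl⟩

/-- Every play is compatible with any strategy of a player who owns no state. -/
theorem winsFrom_iff_of_forall_owner_ne {b : Bool} (hb : ∀ s, G.owner s ≠ b) (c₀ : Config S) :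
    G.WinsFrom b c₀ ↔ ∀ ρ : PlayOn G.Step, ρ.f 0 = some c₀ → G.WinsPlay b ρ := by
  constructor
  · rintro ⟨σ, hσ⟩ ρ h₀
    exact hσ ρ h₀ fun _ c _ hc => absurd hc (hb c.1)
  · intro h
    refine ⟨⟨fun _ => none, fun _ _ _ h => (nomatch h), fun _ c hc _ => absurd hc (hb c.1)⟩, ?_⟩
    exact fun ρ h₀ _ => h ρ h₀

end OCPG

section ltGadget

variable {c : ℕ}

theorem ltGadget_step_self (x : Config (Fin (c+1))) : (ltGadget c).Step x x :=
  Or.inl ⟨rfl, sub_self _⟩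

theorem ltGadget_step_index_add_counter {x y : Config (Fin (c+1))} (h : (ltGadget c).Step x y) :
    (y.1 : ℕ) + y.2 = x.1 + x.2 := by
  rcases h with ⟨h, _⟩ | ⟨_, _⟩
  · rw [h]
    omega
  · omega

def ltGadgetDescent (c i : ℕ) (hci : c ≤ i) : PlayOn (ltGadget c).Step where
  f n := some (⟨min n c, by omega⟩, i - min n c)
  start := rfl
  succ n _ h := by
    refine ⟨_, rfl, ?_⟩
    cases Option.some_injective _ h
    by_cases hn : n < c
    · exact Or.inr ⟨by simp only; omega, by simp only; omega⟩
    · exact Or.inl ⟨Fin.ext (by simp only; omega), by simp only; omega⟩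
  maximal _ _ _ h := nomatch h

end ltGadget

theorem ltGadget_correct_general (c : ℕ) (i : ℕ) :
    (ltGadget c).WinsFrom true (⟨0, Nat.succ_pos c⟩, i) ↔ i < c := by
  have hinf := PlayOn.isSome_of_forall_exists_step fun x => ⟨x, ltGadget_step_self (c := c) x⟩
  rw [OCPG.winsFrom_iff_of_forall_owner_ne _ (fun _ => Bool.false_ne_true)]
  constructor
  · intro hwin
    by_contra! hci
    have h := hwin (ltGadgetDescent c i hci) rfl
    rw [OCPG.winsPlay_true_iff_of_isSome _ (hinf _),
      OCPG.verifierWinsInf_iff_of_eventually_color_eq _ (k := 1) (N := c)] at h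
    · exact Nat.not_even_one h
    · intro n hn
      exact ⟨_, rfl, if_pos (min_eq_right hn)⟩
  · intro hi ρ h₀
    rw [OCPG.winsPlay_true_iff_of_isSome _ (hinf ρ),
      OCPG.verifierWinsInf_iff_of_eventually_color_eq _ (k := 0) (N := 0)]
    · exact Even.zero
    · intro n _
      obtain ⟨x, hx⟩ := Option.isSome_iff_exists.mp (hinf ρ n)
      have hsum := ρ.apply_eq_of_step_invariant (fun x => (x.1 : ℕ) + x.2)
        (fun _ _ => ltGadget_step_index_add_counter) h₀ n x hx
      exact ⟨x, hx, if_neg (by simp only at hsum; omega)⟩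

/-- Verifier wins the `r < c` gadget from `(v_0, i)` iff `i < c`. -/
theorem ltGadget_correct (c : ℕ) (hc : 1 ≤ c) (i : ℕ) :
    (ltGadget c).WinsFrom true (⟨0, Nat.succ_pos c⟩, i) ↔ i < c :=
  ltGadget_correct_general c i

end OneCounter
end

section
/- Let c ≥ 0 be a natural number and consider the one-counter parity game with Falsifier-owned states w_0,…,w_{c+1}, where each w_j has a weight-0 self-loop, there is a weight −1 edge from w_j to w_{j+1} for each 0 ≤ j ≤ c, state w_{c+1} has color 1 and all other states have color 0. Then for every i ∈ ℕ, Verifier has a winning strategy from the configuration (w_0, i) if and only if i ≤ c. -/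
namespace OneCounter

/-- The gadget game for `r ≤ c`: Falsifier-owned states `w_0, …, w_{c+1}`, each
with a weight-0 self-loop, weight −1 edges `w_j → w_{j+1}` for `0 ≤ j ≤ c`,
state `w_{c+1}` colored 1 and all others colored 0. -/
def leGadget (c : ℕ) : OCPG (Fin (c+2)) where
  owner := fun _ => false
  trans := fun x v y => (x = y ∧ v = 0) ∨ ((x : ℕ) + 1 = (y : ℕ) ∧ v = -1)
  color := fun x => if (x : ℕ) = c + 1 then 1 else 0

/-- Verifier wins the `r ≤ c` gadget from `(w_0, i)` iff `i ≤ c`. -/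
theorem leGadget_correct (c : ℕ) (i : ℕ) :
    (leGadget c).WinsFrom true (⟨0, Nat.succ_pos (c+1)⟩, i) ↔ i ≤ c := by
  constructor
  · rintro ⟨σ, hσ⟩
    by_contra hic
    push_neg at hic
    -- Build the play that decrements to w_unknown{c+1} and then loops.
    have hmin : ∀ n, min n (c+1) < c + 2 := fun n => by omega
    set ρ : PlayOn (leGadget c).Step :=
      { f := fun n => some (⟨min n (c+1), hmin n⟩, i - min n (c+1))
        start := rfl
        succ := by
          intro n c' hc'
          refine ⟨(⟨min n (c+1), hmin n⟩, i - min n (c+1)), rfl, ?_⟩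
          cases hc'
          show (leGadget c).trans _ _ _
          rcases le_or_gt (c+1) n with h | h
          · left
            constructor
            · ext; simp; omega
            · simp
              omega
          · right
            have h1 : min n (c+1) = n := by omega
            have h2 : min (n+1) (c+1) = n+1 := by omega
            constructor
            · simp [h1, h2]
            · simp [h1, h2]
              have hni : n + 1 ≤ i := by omega
              have hni' : n ≤ i := by omega
              push_cast [Nat.cast_sub hni, Nat.cast_sub hni']
              ring
        maximal := by intro n a ha hn; simp at hn } with hρ
    have hcomp : Compat σ ρ := by
      intro n a ha hm
      simp [leGadget] at hm
    have hf0 : ρ.f 0 = some ((⟨0, Nat.succ_pos (c+1)⟩ : Fin (c+2)), i) := by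
      simp [hρ]
    have := hσ ρ hf0 hcomp
    rcases this with ⟨n, a, _, hnone, _⟩ | ⟨_, hiff⟩
    · simp [hρ] at hnone
    · obtain ⟨k, hk, hek, _⟩ := hiff.mpr rfl
      obtain ⟨n, hn, a, ha, hcol⟩ := hk (c+1)
      have : a = ((⟨min n (c+1), hmin n⟩ : Fin (c+2)), i - min n (c+1)) := by
        simpa [hρ] using ha.symm
      subst this
      have hmn : min n (c+1) = c+1 := by omega
      simp [leGadget, hmn] at hcol
      subst hcol
      exact (Nat.not_even_iff_odd.mpr odd_one) hek
  · intro hi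
    refine ⟨⟨fun _ => none, by intro _ _ _ h; simp at h,
      by intro h a ha _; simp [leGadget] at ha⟩, ?_⟩
    intro ρ h0 _
    have selfloop : ∀ x : Config (Fin (c+2)), (leGadget c).Step x x := by
      intro x; exact Or.inl ⟨rfl, by ring⟩
    have hsome : ∀ n, (ρ.f n).isSome := by
      intro n
      induction n with
      | zero => exact ρ.start
      | succ n ih =>
        obtain ⟨a, ha⟩ := Option.isSome_iff_exists.mp ih
        cases hn : ρ.f (n+1) with
        | none => exact absurd (selfloop a) (ρ.maximal n a ha hn a)
        | some b => simp
    have hinv : ∀ n p, ρ.f n = some p → (p.1 : ℕ) + p.2 ≤ i := by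
      intro n
      induction n with
      | zero =>
        intro p hp
        rw [h0] at hp
        cases hp
        simp
      | succ n ih =>
        intro p hp
        obtain ⟨q, hq, hstep⟩ := ρ.succ n p hp
        have hq' := ih q hq
        rcases hstep with ⟨h1, h2⟩ | ⟨h1, h2⟩
        · have h1' : (q.1 : ℕ) = p.1 := congrArg Fin.val h1
          omega
        · omega
    right
    refine ⟨hsome, ?_⟩
    simp only [iff_true]
    refine ⟨0, ?_, Even.zero, fun k' _ => Nat.zero_le k'⟩
    intro N
    obtain ⟨a, ha⟩ := Option.isSome_iff_exists.mp (hsome N)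
    refine ⟨N, le_refl N, a, ha, ?_⟩
    have := hinv N a ha
    have : (a.1 : ℕ) ≠ c + 1 := by omega
    simp [leGadget, this]

end OneCounter
end
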